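/- Let S be an AG-groupoid with left identity such that every fuzzy left ideal of S is idempotent under the sup-min convolution product. Then S is intra-regular: for every a in S there exist x, y in S with a = (x*(a*a))*y. -/

import Mathlib

/-!
Apply the hypothesis to the characteristic function of the left ideal `S a`, which contains
`a = e a`. Idempotency at `a` forces a factorization `a = (s a) (r a)`, and the medial and
paramedial laws rewrite it as `a = (e (a a)) ((s r) e)`.
-/

section AGGroupoid

variable {S : Type*} {mul : S → S → S}

theorem medial_of_left_invertive (hinv : ∀ a b c : S, mul (mul a b) c = mul (mul c b) a)
    (p q r s : S) : mul (mul p q) (mul r s) = mul (mul p r) (mul q s) := by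
  rw [hinv p q (mul r s), hinv r s q, hinv (mul q s) r p]

theorem paramedial_of_left_invertive (hinv : ∀ a b c : S, mul (mul a b) c = mul (mul c b) a)
    {e : S} (he : ∀ x : S, mul e x = x) (p q r s : S) :
    mul (mul p q) (mul r s) = mul (mul s r) (mul q p) := by
  symm
  calc mul (mul s r) (mul q p)
      = mul (mul (mul r s) e) (mul q p) := by rw [← hinv e s r, he]
    _ = mul (mul (mul r s) q) p := by rw [medial_of_left_invertive hinv, he]
    _ = mul (mul p r) (mul q s) := by rw [hinv r s q, hinv (mul q s) r p]
    _ = mul (mul p q) (mul r s) := (medial_of_left_invertive hinv p q r s).symm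

theorem mul_mem_range_mul_right (hinv : ∀ a b c : S, mul (mul a b) c = mul (mul c b) a)
    {e : S} (he : ∀ x : S, mul e x = x) (a u : S) {v : S} (hv : v ∈ Set.range (mul · a)) :
    mul u v ∈ Set.range (mul · a) := by
  obtain ⟨s, rfl⟩ := hv
  refine ⟨mul (mul u e) s, ?_⟩
  calc mul (mul (mul u e) s) a
      = mul (mul a s) (mul u e) := hinv _ _ _
    _ = mul (mul e u) (mul s a) := (paramedial_of_left_invertive hinv he e u s a).symm
    _ = mul u (mul s a) := by rw [he]

theorem eq_mul_mul_self_mul_of_eq_mul (hinv : ∀ a b c : S, mul (mul a b) c = mul (mul c b) a)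
    {e : S} (he : ∀ x : S, mul e x = x) {a s r : S} (ha : a = mul (mul s a) (mul r a)) :
    a = mul (mul e (mul a a)) (mul (mul s r) e) := by
  calc a = mul (mul s r) (mul a a) := ha.trans (medial_of_left_invertive hinv s a r a)
    _ = mul (mul e (mul s r)) (mul a a) := by rw [he]
    _ = mul (mul a a) (mul (mul s r) e) := paramedial_of_left_invertive hinv he e (mul s r) a a
    _ = mul (mul e (mul a a)) (mul (mul s r) e) := by rw [he]

end AGGroupoid

theorem indicator_one_le_indicator_one_mul {S : Type*} {mul : S → S → S} {L : Set S}
    (hL : ∀ u v, v ∈ L → mul u v ∈ L) (u v : S) :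
    L.indicator (1 : S → ℝ) v ≤ L.indicator 1 (mul u v) :=
  Set.indicator_apply_le' (fun hv => by simp [Set.indicator_of_mem (hL u v hv)])
    (fun _ => Set.indicator_nonneg (by simp) _)

theorem exists_mul_mem_of_sSup_indicator_eq_one {S : Type*} {mul : S → S → S} {L : Set S} {a : S}
    (h : sSup {t : ℝ | ∃ b c : S, a = mul b c ∧
      t = min (L.indicator 1 b) (L.indicator 1 c)} = 1) :
    ∃ b ∈ L, ∃ c ∈ L, a = mul b c := by
  by_contra! hL
  refine absurd (h ▸ Real.sSup_nonpos ?_) (by norm_num : ¬(1 : ℝ) ≤ 0)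
  rintro _ ⟨b, c, rfl, rfl⟩
  by_cases hb : b ∈ L
  · have hc : c ∉ L := fun hc => hL b hb c hc rfl
    exact (min_le_right _ _).trans (Set.indicator_of_notMem hc _).le
  · exact (min_le_left _ _).trans (Set.indicator_of_notMem hb _).le

/-- If every fuzzy left ideal of an AG-groupoid with left identity is
    idempotent under the sup-min convolution, then S is intra-regular. -/
theorem ag_intra_regular_of_fuzzy_idempotent {S : Type*} (mul : S → S → S)
    (hinv : ∀ a b c : S, mul (mul a b) c = mul (mul c b) a)
    (e : S) (he : ∀ x : S, mul e x = x)
    (h : ∀ μ : S → ℝ, (∀ x, 0 ≤ μ x) → (∀ x, μ x ≤ 1) →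
      (∀ u v : S, μ v ≤ μ (mul u v)) →
      (∀ a : S,
        sSup {t : ℝ | ∃ b c : S, a = mul b c ∧ t = min (μ b) (μ c)}
          = μ a)) :
    ∀ a : S, ∃ x y : S, a = mul (mul x (mul a a)) y := by
  intro a
  set L := Set.range (mul · a)
  have ha : a ∈ L := ⟨e, he a⟩
  have hidem := h (L.indicator 1) (Set.indicator_nonneg (by simp))
    (fun x => Set.indicator_apply_le' (by simp) (by simp))
    (indicator_one_le_indicator_one_mul (mul_mem_range_mul_right hinv he a)) a
  rw [Set.indicator_of_mem ha, Pi.one_apply] at hidem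
  obtain ⟨_, ⟨s, rfl⟩, _, ⟨r, rfl⟩, hsr⟩ := exists_mul_mem_of_sSup_indicator_eq_one hidem
  exact ⟨e, mul (mul s r) e, eq_mul_mul_self_mul_of_eq_mul hinv he hsr⟩
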